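/- Let d ≥ 2 and q₁,…,q_d ≥ 2 be integers. The closure in ℝ of the union over all n ≥ 2 of the sets of eigenvalues of the real symmetric matrices Q_n equals the range {Q̂(t) : t ∈ ℝ^d} of Q̂. -/

import Mathlib

open Finset Real

/-- `Q̂(t) = (1/D)·Σ_{i≠j} √(q_i q_j)·cos(t_i − t_j)`, where `D = (d−1)(q₁+⋯+q_d)`. -/
noncomputable def Qhat (d : ℕ) (q : Fin d → ℕ) (t : Fin d → ℝ) : ℝ :=
  (1 / (((d : ℝ) - 1) * ∑ j, (q j : ℝ))) *
    ∑ p ∈ Finset.univ.offDiag,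
      Real.sqrt ((q p.1 : ℝ) * (q p.2 : ℝ)) * Real.cos (t p.1 - t p.2)

/-- The finite set `B_n° = {k ∈ ℤ^d : Σk = 0, k_i ≥ 1 for i ≤ d−1, k_d ≥ 1−n}`. -/
def BnInt (d n : ℕ) : Set (Fin d → ℤ) :=
  {k | (∑ i, k i = 0) ∧ ∀ i : Fin d,
    ((i : ℕ) < d - 1 → 1 ≤ k i) ∧ ((i : ℕ) = d - 1 → 1 - (n : ℤ) ≤ k i)}

/-- `lam` is an eigenvalue of the symmetric matrix `Q_n` indexed by `B_n°`, whose
`(k, l)` entry is `√(q_i q_j)/D` if `l = k + e_i − e_j` (`i ≠ j`) and `0` otherwise. -/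
def IsEigenvalueQn (d : ℕ) (q : Fin d → ℕ) (n : ℕ) (lam : ℝ) : Prop :=
  ∃ f : (Fin d → ℤ) → ℝ, f ≠ 0 ∧ (∀ k ∉ BnInt d n, f k = 0) ∧
    ∀ k ∈ BnInt d n,
      (1 / (((d : ℝ) - 1) * ∑ j, (q j : ℝ))) *
        ∑ p ∈ Finset.univ.offDiag,
          Real.sqrt ((q p.1 : ℝ) * (q p.2 : ℝ)) * f (k + Pi.single p.1 1 - Pi.single p.2 1)
      = lam * f k

/-!
`Q_n` is the compression to `B_n°` of the translation-invariant operator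
`L f(k) = Σ_{i≠j} c_{ij} f(k + e_i − e_j)` on `ℤ^d`, whose symbol is `Q̂`:
`L (k ↦ e^{i k·t}) = Q̂(t) · (k ↦ e^{i k·t})`.

Every eigenvalue lies in `[min Q̂, max Q̂]`: a discrete Fourier transform on a torus `(ℤ/N)^d`
so large that the support of an eigenvector `f` does not wrap around turns `⟨f, L f⟩` into an
average of values of `Q̂` with weights `|f̂|²`.

Conversely, a real plane wave cut off to a box of side `m` in the hyperplane `Σ k = 0` is an
approximate eigenvector for `Q̂(t)`: its residual lives on the `O(m^{d-2})` boundary points, out of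
`m^{d-1}` points in all, so by the spectral theorem `Q_n` has an eigenvalue within
`O(m^{-1/2})` of `Q̂(t)`. Finally `Q̂` is continuous and periodic, so its range is the compact
interval `[min Q̂, max Q̂]`.
-/

open Module.End in
theorem LinearMap.IsSymmetric.exists_hasEigenvalue_sq_sub_le {𝕜 E : Type*} [RCLike 𝕜]
    [NormedAddCommGroup E] [InnerProductSpace 𝕜 E] [FiniteDimensional 𝕜 E] {T : E →ₗ[𝕜] E}
    (hT : T.IsSymmetric) {v : E} (hv : v ≠ 0) {μ δ : ℝ}
    (hres : ‖T v - (μ : 𝕜) • v‖ ^ 2 ≤ δ * ‖v‖ ^ 2) :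
    ∃ ev : ℝ, HasEigenvalue T ev ∧ (ev - μ) ^ 2 ≤ δ := by
  have : Nontrivial E := nontrivial_of_ne v 0 hv
  have : Nonempty (Fin (Module.finrank 𝕜 E)) := ⟨⟨0, Module.finrank_pos⟩⟩
  set b := hT.eigenvectorBasis rfl
  obtain ⟨i, -, hi⟩ := exists_min_image univ (fun j ↦ (hT.eigenvalues rfl j - μ) ^ 2)
    univ_nonempty
  refine ⟨_, hT.hasEigenvalue_eigenvalues rfl i, ?_⟩
  have hcoeff (j) : inner 𝕜 (b j) (T v - (μ : 𝕜) • v)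
      = ((hT.eigenvalues rfl j - μ : ℝ) : 𝕜) * inner 𝕜 (b j) v := by
    rw [inner_sub_right, ← hT, hT.apply_eigenvectorBasis, inner_smul_left, inner_smul_right,
      RCLike.conj_ofReal]
    push_cast
    ring
  have key : (hT.eigenvalues rfl i - μ) ^ 2 * ‖v‖ ^ 2 ≤ δ * ‖v‖ ^ 2 := by
    refine le_trans ?_ hres
    rw [← b.sum_sq_norm_inner_right v, ← b.sum_sq_norm_inner_right, mul_sum]
    gcongr with j
    rw [hcoeff, norm_mul, mul_pow, RCLike.norm_ofReal, sq_abs]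
    exact mul_le_mul_of_nonneg_right (hi j (mem_univ j)) (by positivity)
  exact le_of_mul_le_mul_right key (by positivity)

section PlaneWave

variable {ι : Type*} [Fintype ι]

noncomputable def planeWave (t : ι → ℝ) : AddChar (ι → ℤ) ℂ where
  toFun k := Complex.exp ((∑ j, (k j : ℝ) * t j : ℝ) * Complex.I)
  map_zero_eq_one' := by simp
  map_add_eq_mul' k l := by
    simp only [Pi.add_apply, Int.cast_add, add_mul, sum_add_distrib, Complex.ofReal_add,
      Complex.exp_add]

lemma planeWave_apply (t : ι → ℝ) (k : ι → ℤ) :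
    planeWave t k = Complex.exp ((∑ j, (k j : ℝ) * t j : ℝ) * Complex.I) := rfl

lemma norm_planeWave (t : ι → ℝ) (k : ι → ℤ) : ‖planeWave t k‖ = 1 :=
  Complex.norm_exp_ofReal_mul_I _

lemma conj_planeWave (t : ι → ℝ) (k : ι → ℤ) :
    (starRingEnd ℂ) (planeWave t k) = planeWave t (-k) := by
  rw [AddChar.map_neg_eq_inv, Complex.inv_eq_conj (norm_planeWave t k)]

variable {N : ℕ} [NeZero N]

noncomputable def gridPoint (a : ι → ZMod N) (j : ι) : ℝ := 2 * π * (a j).val / N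

noncomputable def gridTransform (N : ℕ) [NeZero N] (S : Finset (ι → ℤ)) (f : (ι → ℤ) → ℝ)
    (a : ι → ZMod N) : ℂ :=
  ∑ k ∈ S, f k * planeWave (gridPoint a) k

lemma planeWave_gridPoint (a : ι → ZMod N) (k : ι → ℤ) :
    planeWave (gridPoint a) k = ∏ j, ZMod.stdAddChar (a j * (k j : ZMod N)) := by
  rw [planeWave_apply, Complex.ofReal_sum, sum_mul, Complex.exp_sum]
  refine prod_congr rfl fun j _ ↦ ?_
  rw [← ZMod.natCast_zmod_val (a j), ← Int.cast_natCast, ← Int.cast_mul, ZMod.stdAddChar_coe,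
    gridPoint]
  push_cast
  ring_nf

lemma sum_prod_stdAddChar_mul [DecidableEq ι] (x : ι → ZMod N) :
    ∑ a : ι → ZMod N, ∏ j, ZMod.stdAddChar (a j * x j)
      = if x = 0 then (N : ℂ) ^ Fintype.card ι else 0 := by
  rw [← Fintype.prod_sum (fun j y ↦ ZMod.stdAddChar (y * x j))]
  simp_rw [AddChar.sum_mulShift _ (ZMod.isPrimitive_stdAddChar N), ZMod.card]
  split_ifs with h
  · simp [h]
  · obtain ⟨j, hj⟩ := Function.ne_iff.mp h
    exact prod_eq_zero (mem_univ j) (by simp [show x j ≠ 0 from hj])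

lemma sum_planeWave_gridPoint [DecidableEq ι] {z : ι → ℤ} (hz : ∀ j, |z j| < N) :
    ∑ a : ι → ZMod N, planeWave (gridPoint a) z
      = if z = 0 then (N : ℂ) ^ Fintype.card ι else 0 := by
  simp_rw [planeWave_gridPoint]
  rw [sum_prod_stdAddChar_mul]
  congr 1
  simp only [funext_iff, Pi.zero_apply, ZMod.intCast_zmod_eq_zero_iff_dvd]
  exact propext <| forall_congr' fun j ↦
    ⟨fun h ↦ Int.eq_zero_of_abs_lt_dvd h (hz j), fun h ↦ h ▸ dvd_zero _⟩

theorem sum_planeWave_mul_normSq_gridTransform [DecidableEq ι] {S : Finset (ι → ℤ)}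
    {f : (ι → ℤ) → ℝ} (hf : ∀ k ∉ S, f k = 0) {w : ι → ℤ}
    (hN : ∀ k ∈ S, ∀ l ∈ S, ∀ j, |k j + w j - l j| < N) :
    ∑ a, planeWave (gridPoint a) w * Complex.normSq (gridTransform N S f a)
      = (N : ℂ) ^ Fintype.card ι * ∑ k ∈ S, (f (k + w) * f k : ℝ) := by
  have hexpand (a : ι → ZMod N) :
      planeWave (gridPoint a) w * Complex.normSq (gridTransform N S f a)
        = ∑ k ∈ S, ∑ l ∈ S, (f k * f l : ℝ) * planeWave (gridPoint a) (k + w - l) := by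
    rw [gridTransform, ← Complex.mul_conj, map_sum, sum_mul_sum, mul_sum]
    refine sum_congr rfl fun k _ ↦ (mul_sum _ _ _).trans (sum_congr rfl fun l _ ↦ ?_)
    rw [map_mul, Complex.conj_ofReal, conj_planeWave, sub_eq_add_neg,
      AddChar.map_add_eq_mul, AddChar.map_add_eq_mul]
    push_cast
    ring
  simp_rw [hexpand]
  rw [sum_comm, Complex.ofReal_sum, mul_sum]
  refine sum_congr rfl fun k hk ↦ ?_
  rw [sum_comm]
  simp_rw [← mul_sum]
  have horth (l) (hl : l ∈ S) : ∑ a : ι → ZMod N, planeWave (gridPoint a) (k + w - l)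
      = if l = k + w then (N : ℂ) ^ Fintype.card ι else 0 := by
    rw [sum_planeWave_gridPoint (z := k + w - l) (hN k hk l hl)]
    simp only [sub_eq_zero, eq_comm]
  rw [sum_congr rfl fun l hl ↦ by rw [horth l hl]]
  simp only [mul_ite, mul_zero, sum_ite_eq']
  split_ifs with hkw
  · push_cast
    ring
  · simp [hf _ hkw]

theorem sum_normSq_gridTransform [DecidableEq ι] {S : Finset (ι → ℤ)} {f : (ι → ℤ) → ℝ}
    (hf : ∀ k ∉ S, f k = 0) (hN : ∀ k ∈ S, ∀ l ∈ S, ∀ j, |k j - l j| < N) :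
    ∑ a, Complex.normSq (gridTransform N S f a) = N ^ Fintype.card ι * ∑ k ∈ S, f k ^ 2 := by
  apply Complex.ofReal_injective
  have h := sum_planeWave_mul_normSq_gridTransform hf (w := 0) (by simpa using hN)
  simp only [AddChar.map_zero_eq_one, one_mul, add_zero] at h
  push_cast
  rw [h]
  simp [sq]

end PlaneWave

section Stencil

variable {ι P : Type*} [Fintype ι] (A : Finset P) (c : P → ℝ) (s : P → ι → ℤ)

def stencilOp (f : (ι → ℤ) → ℝ) (k : ι → ℤ) : ℝ := ∑ p ∈ A, c p * f (k + s p)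

noncomputable def stencilSymbol (t : ι → ℝ) : ℝ :=
  ∑ p ∈ A, c p * cos (∑ j, (s p j : ℝ) * t j)

def IsSymmetricStencil : Prop :=
  ∀ g : (ι → ℤ) → ℝ, ∑ p ∈ A, c p * g (s p) = ∑ p ∈ A, c p * g (-s p)

def IsStencilEigenvalue (B : Set (ι → ℤ)) (ev : ℝ) : Prop :=
  ∃ f : (ι → ℤ) → ℝ, f ≠ 0 ∧ (∀ k ∉ B, f k = 0) ∧ ∀ k ∈ B, stencilOp A c s f k = ev * f k

def stencilBoundary (X B : Finset (ι → ℤ)) : Finset (ι → ℤ) :=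
  {k ∈ B | ∃ p ∈ A, ¬(k + s p ∈ X ↔ k ∈ X)}

def stencilMatrix (B : Finset (ι → ℤ)) : Matrix B B ℝ :=
  Matrix.of fun k l ↦ ∑ p ∈ A with (l : ι → ℤ) = k + s p, c p

variable {A c s}

lemma stencilSymbol_eq_sum_planeWave (hsymm : IsSymmetricStencil A c s) (t : ι → ℝ) :
    (stencilSymbol A c s t : ℂ) = ∑ p ∈ A, c p * planeWave t (s p) := by
  have hsin : ∑ p ∈ A, c p * sin (∑ j, (s p j : ℝ) * t j) = 0 := by
    have h := hsymm fun k ↦ sin (∑ j, (k j : ℝ) * t j)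
    simp only [Pi.neg_apply, Int.cast_neg, neg_mul, sum_neg_distrib, sin_neg, mul_neg] at h
    linarith
  apply Complex.ext
  · simp only [stencilSymbol, Complex.ofReal_re, Complex.re_sum, Complex.re_ofReal_mul,
      planeWave_apply, Complex.exp_ofReal_mul_I_re]
  · simp only [Complex.ofReal_im, Complex.im_sum, Complex.im_ofReal_mul, planeWave_apply,
      Complex.exp_ofReal_mul_I_im, hsin]

lemma continuous_stencilSymbol : Continuous (stencilSymbol A c s) := by
  unfold stencilSymbol
  fun_prop

lemma stencilSymbol_toIcoMod (t : ι → ℝ) :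
    stencilSymbol A c s (fun j ↦ toIcoMod two_pi_pos 0 (t j)) = stencilSymbol A c s t := by
  refine sum_congr rfl fun p _ ↦ congrArg (c p * ·) ?_
  have hdiv : ∑ j, (s p j : ℝ) * t j = ∑ j, (s p j : ℝ) * toIcoMod two_pi_pos 0 (t j)
      + ((∑ j, s p j * toIcoDiv two_pi_pos 0 (t j) : ℤ) : ℝ) * (2 * π) := by
    conv_lhs => enter [2, j]; rw [← toIcoMod_add_toIcoDiv_zsmul two_pi_pos 0 (t j)]
    push_cast
    simp only [zsmul_eq_mul, mul_add, sum_add_distrib, sum_mul, mul_assoc]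
  rw [hdiv, cos_add_int_mul_two_pi]

lemma exists_forall_stencilSymbol_mem_Icc :
    ∃ t₁ t₂ : ι → ℝ, ∀ t,
      stencilSymbol A c s t ∈ Set.Icc (stencilSymbol A c s t₁) (stencilSymbol A c s t₂) := by
  set K := Set.Icc (0 : ι → ℝ) fun _ ↦ 2 * π
  have hne : K.Nonempty := Set.nonempty_Icc.mpr fun _ ↦ two_pi_pos.le
  obtain ⟨t₁, -, h₁⟩ := isCompact_Icc.exists_isMinOn hne continuous_stencilSymbol.continuousOn
  obtain ⟨t₂, -, h₂⟩ := isCompact_Icc.exists_isMaxOn hne continuous_stencilSymbol.continuousOn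
  refine ⟨t₁, t₂, fun t ↦ ?_⟩
  have hK : (fun j ↦ toIcoMod two_pi_pos 0 (t j)) ∈ K :=
    ⟨fun j ↦ (toIcoMod_mem_Ico two_pi_pos 0 (t j)).1,
      fun j ↦ by simpa using (toIcoMod_mem_Ico two_pi_pos 0 (t j)).2.le⟩
  rw [← stencilSymbol_toIcoMod t]
  exact ⟨isMinOn_iff.mp h₁ _ hK, isMaxOn_iff.mp h₂ _ hK⟩

theorem sum_stencilSymbol_mul_normSq_gridTransform [DecidableEq ι]
    (hsymm : IsSymmetricStencil A c s) {N : ℕ} [NeZero N] {S : Finset (ι → ℤ)}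
    {f : (ι → ℤ) → ℝ} (hf : ∀ k ∉ S, f k = 0)
    (hN : ∀ p ∈ A, ∀ k ∈ S, ∀ l ∈ S, ∀ j, |k j + s p j - l j| < N) :
    ∑ a, stencilSymbol A c s (gridPoint a) * Complex.normSq (gridTransform N S f a)
      = N ^ Fintype.card ι * ∑ k ∈ S, stencilOp A c s f k * f k := by
  apply Complex.ofReal_injective
  push_cast
  simp_rw [stencilSymbol_eq_sum_planeWave hsymm, sum_mul]
  rw [sum_comm]
  simp_rw [mul_assoc, ← mul_sum]
  rw [sum_congr rfl fun p hp ↦ by rw [sum_planeWave_mul_normSq_gridTransform hf (hN p hp)]]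
  simp only [stencilOp, Complex.ofReal_sum, Complex.ofReal_mul, mul_sum, sum_mul]
  rw [sum_comm]
  exact sum_congr rfl fun k _ ↦ sum_congr rfl fun p _ ↦ by ring

theorem sum_stencilOp_mul_self_mem_Icc [DecidableEq ι] (hsymm : IsSymmetricStencil A c s)
    {r : ℕ} (hs : ∀ p ∈ A, ∀ j, |s p j| ≤ r) {lo hi : ℝ}
    (hsymb : ∀ t, stencilSymbol A c s t ∈ Set.Icc lo hi) {n : ℕ} {S : Finset (ι → ℤ)}
    (hS : ∀ k ∈ S, ∀ j, |k j| ≤ n) {f : (ι → ℤ) → ℝ} (hf : ∀ k ∉ S, f k = 0) :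
    ∑ k ∈ S, stencilOp A c s f k * f k ∈
      Set.Icc (lo * ∑ k ∈ S, f k ^ 2) (hi * ∑ k ∈ S, f k ^ 2) := by
  -- on the torus `(ℤ/N)^ι` the differences `k + s p - l` below do not wrap around
  set N := 2 * n + r + 1
  have hN (p) (hp : p ∈ A) (k) (hk : k ∈ S) (l) (hl : l ∈ S) (j : ι) :
      |k j + s p j - l j| < N := by
    have := abs_sub (k j + s p j) (l j)
    have := abs_add_le (k j) (s p j)
    have := hS k hk j; have := hS l hl j; have := hs p hp j
    push_cast [N]; linarith
  have hN₀ (k) (hk : k ∈ S) (l) (hl : l ∈ S) (j : ι) : |k j - l j| < N := by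
    have := abs_sub (k j) (l j)
    have := hS k hk j; have := hS l hl j
    push_cast [N]; linarith
  have hform := sum_stencilSymbol_mul_normSq_gridTransform hsymm hf hN
  have hnorm := sum_normSq_gridTransform hf hN₀
  have hNpos : (0 : ℝ) < (N : ℝ) ^ Fintype.card ι := by positivity
  constructor
  · refine le_of_mul_le_mul_left ?_ hNpos
    calc (N : ℝ) ^ Fintype.card ι * (lo * ∑ k ∈ S, f k ^ 2)
          = ∑ a, lo * Complex.normSq (gridTransform N S f a) := by
          rw [← mul_sum, hnorm]; ring
      _ ≤ ∑ a, stencilSymbol A c s (gridPoint a) * Complex.normSq (gridTransform N S f a) :=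
          sum_le_sum fun a _ ↦ mul_le_mul_of_nonneg_right (hsymb _).1 (Complex.normSq_nonneg _)
      _ = _ := hform
  · refine le_of_mul_le_mul_left ?_ hNpos
    calc (N : ℝ) ^ Fintype.card ι * ∑ k ∈ S, stencilOp A c s f k * f k
          = ∑ a, stencilSymbol A c s (gridPoint a) * Complex.normSq (gridTransform N S f a) :=
          hform.symm
      _ ≤ ∑ a, hi * Complex.normSq (gridTransform N S f a) :=
          sum_le_sum fun a _ ↦ mul_le_mul_of_nonneg_right (hsymb _).2 (Complex.normSq_nonneg _)
      _ = _ := by rw [← mul_sum, hnorm]; ring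

theorem IsStencilEigenvalue.mem_Icc [DecidableEq ι] (hsymm : IsSymmetricStencil A c s)
    {r : ℕ} (hs : ∀ p ∈ A, ∀ j, |s p j| ≤ r) {lo hi : ℝ}
    (hsymb : ∀ t, stencilSymbol A c s t ∈ Set.Icc lo hi) {n : ℕ} {B : Set (ι → ℤ)}
    (hB : ∀ k ∈ B, ∀ j, |k j| ≤ n) {ev : ℝ} (hev : IsStencilEigenvalue A c s B ev) :
    ev ∈ Set.Icc lo hi := by
  obtain ⟨f, hf0, hfB, hfev⟩ := hev
  set S := Fintype.piFinset fun _ : ι ↦ Icc (-n : ℤ) n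
  have hS (k) (hk : k ∈ S) (j : ι) : |k j| ≤ n :=
    abs_le.mpr (Finset.mem_Icc.mp (Fintype.mem_piFinset.mp hk j))
  have hfS (k) (hk : k ∉ S) : f k = 0 := hfB k fun hkB ↦
    hk (Fintype.mem_piFinset.mpr fun j ↦ Finset.mem_Icc.mpr (abs_le.mp (hB k hkB j)))
  have hform : ∑ k ∈ S, stencilOp A c s f k * f k = ev * ∑ k ∈ S, f k ^ 2 := by
    rw [mul_sum]
    refine sum_congr rfl fun k _ ↦ ?_
    by_cases hk : k ∈ B
    · rw [hfev k hk]; ring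
    · rw [hfB k hk]; ring
  have hpos : 0 < ∑ k ∈ S, f k ^ 2 := by
    obtain ⟨k, hk⟩ := Function.ne_iff.mp hf0
    exact sum_pos' (fun _ _ ↦ sq_nonneg _) ⟨k, by_contra (hk ∘ hfS k), sq_pos_of_ne_zero hk⟩
  obtain ⟨hlo, hhi⟩ := sum_stencilOp_mul_self_mem_Icc hsymm hs hsymb hS hfS
  rw [hform] at hlo hhi
  exact ⟨le_of_mul_le_mul_right hlo hpos, le_of_mul_le_mul_right hhi hpos⟩

lemma sum_ite_val_eq_extend {B : Finset (ι → ℤ)} (u : B → ℝ) (x : ι → ℤ) :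
    ∑ l : B, (if (l : ι → ℤ) = x then u l else 0) = Function.extend Subtype.val u 0 x := by
  by_cases hx : x ∈ B
  · simp_rw [show ∀ l : B, (l : ι → ℤ) = x ↔ l = ⟨x, hx⟩ from fun l ↦ by rw [Subtype.ext_iff],
      Fintype.sum_ite_eq']
    exact (Subtype.val_injective.extend_apply _ _ _).symm
  · rw [Function.extend_apply' _ _ _ fun ⟨l, hl⟩ ↦ hx (hl ▸ l.2)]
    exact sum_eq_zero fun l _ ↦ if_neg fun (h : (l : ι → ℤ) = x) ↦ hx (h ▸ l.2)

lemma stencilMatrix_mulVec (B : Finset (ι → ℤ)) (u : B → ℝ) (k : B) :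
    (stencilMatrix A c s B).mulVec u k = stencilOp A c s (Function.extend Subtype.val u 0) k := by
  simp only [Matrix.mulVec, dotProduct, stencilMatrix, Matrix.of_apply, sum_filter, sum_mul,
    stencilOp]
  rw [sum_comm]
  refine sum_congr rfl fun p _ ↦ ?_
  rw [← sum_ite_val_eq_extend, mul_sum]
  exact sum_congr rfl fun l _ ↦ by split_ifs <;> simp

lemma stencilMatrix_isHermitian (hsymm : IsSymmetricStencil A c s) (B : Finset (ι → ℤ)) :
    (stencilMatrix A c s B).IsHermitian := by
  ext k l
  have h := hsymm fun x ↦ if (l : ι → ℤ) = k + x then 1 else 0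
  simp only [mul_ite, mul_one, mul_zero] at h
  simp only [Matrix.conjTranspose_apply, star_trivial, stencilMatrix, Matrix.of_apply, sum_filter,
    h]
  refine sum_congr rfl fun p _ ↦ if_congr ?_ rfl rfl
  constructor <;> intro h <;> rw [h] <;> abel

theorem exists_isStencilEigenvalue_sq_sub_le (hsymm : IsSymmetricStencil A c s)
    {B : Finset (ι → ℤ)} {f : (ι → ℤ) → ℝ} (hf : f ≠ 0) (hfB : ∀ k ∉ B, f k = 0) {μ δ : ℝ}
    (hres : ∑ k ∈ B, (stencilOp A c s f k - μ * f k) ^ 2 ≤ δ * ∑ k ∈ B, f k ^ 2) :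
    ∃ ev, IsStencilEigenvalue A c s B ev ∧ (ev - μ) ^ 2 ≤ δ := by
  have hT := Matrix.isSymmetric_toEuclideanLin_iff.mpr (stencilMatrix_isHermitian hsymm B)
  have hext : Function.extend Subtype.val (fun k : B ↦ f k) 0 = f := by
    funext x
    by_cases hx : x ∈ B
    · exact Subtype.val_injective.extend_apply _ _ (⟨x, hx⟩ : B)
    · rw [Function.extend_apply' _ _ _ fun ⟨l, hl⟩ ↦ hx (hl ▸ l.2), hfB x hx, Pi.zero_apply]
  set v : EuclideanSpace ℝ B := WithLp.toLp 2 fun k ↦ f k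
  have hv : v ≠ 0 := by
    obtain ⟨k, hk⟩ := Function.ne_iff.mp hf
    have hkB : k ∈ B := by_contra (hk ∘ hfB k)
    exact fun h ↦ hk (congrArg (· ⟨k, hkB⟩) h)
  have hnorm : ‖Matrix.toEuclideanLin (stencilMatrix A c s B) v - (μ : ℝ) • v‖ ^ 2
      ≤ δ * ‖v‖ ^ 2 := by
    rw [EuclideanSpace.real_norm_sq_eq, EuclideanSpace.real_norm_sq_eq]
    convert hres using 2 <;> rw [← sum_coe_sort B]
    refine sum_congr rfl fun k _ ↦ ?_
    change ((stencilMatrix A c s B).mulVec (fun k : B ↦ f k) k - μ * f k) ^ 2 = _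
    rw [stencilMatrix_mulVec, hext]
  obtain ⟨ev, hev, hle⟩ := hT.exists_hasEigenvalue_sq_sub_le hv hnorm
  obtain ⟨x, hx⟩ := hev.exists_hasEigenvector
  refine ⟨ev, ⟨Function.extend Subtype.val x 0, ?_, ?_, ?_⟩, hle⟩
  · have hx0 : x.ofLp ≠ 0 := by simpa using hx.2
    obtain ⟨k, hk⟩ := Function.ne_iff.mp hx0
    exact Function.ne_iff.mpr ⟨k, by rwa [Subtype.val_injective.extend_apply]⟩
  · exact fun k hk ↦ Function.extend_apply' _ _ _ fun ⟨l, hl⟩ ↦ hk (hl ▸ l.2)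
  · intro k hk
    have h : (stencilMatrix A c s B).mulVec x.ofLp ⟨k, hk⟩ = ev * x.ofLp ⟨k, hk⟩ :=
      congrArg (· ⟨k, hk⟩) (Module.End.mem_eigenspace_iff.mp hx.1)
    rwa [stencilMatrix_mulVec, ← Subtype.val_injective.extend_apply x.ofLp 0 ⟨k, hk⟩] at h

lemma stencilOp_re_mul_planeWave (hsymm : IsSymmetricStencil A c s) (u : ℂ) (t : ι → ℝ)
    (k : ι → ℤ) :
    stencilOp A c s (fun k ↦ (u * planeWave t k).re) k
      = stencilSymbol A c s t * (u * planeWave t k).re := by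
  have h : ∑ p ∈ A, (c p : ℂ) * (u * planeWave t (k + s p))
      = stencilSymbol A c s t * (u * planeWave t k) := by
    rw [stencilSymbol_eq_sum_planeWave hsymm, sum_mul]
    refine sum_congr rfl fun p _ ↦ ?_
    rw [AddChar.map_add_eq_mul]
    ring
  simpa only [stencilOp, Complex.re_sum, Complex.re_ofReal_mul] using congrArg Complex.re h

lemma exists_card_le_two_mul_sum_sq_re_mul_planeWave (X : Finset (ι → ℤ))
    (t : ι → ℝ) : ∃ u : ℂ, ‖u‖ = 1 ∧ (#X : ℝ) ≤ 2 * ∑ k ∈ X, (u * planeWave t k).re ^ 2 := by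
  have h : ∑ k ∈ X, ((1 * planeWave t k).re ^ 2 + (Complex.I * planeWave t k).re ^ 2) = #X := by
    rw [card_eq_sum_ones, Nat.cast_sum]
    refine sum_congr rfl fun k _ ↦ ?_
    have h1 : ‖planeWave t k‖ ^ 2 = 1 := by rw [norm_planeWave, one_pow]
    rw [Complex.sq_norm, Complex.normSq_apply] at h1
    rw [one_mul, Complex.I_mul_re, neg_sq, Nat.cast_one]
    linear_combination h1
  rw [sum_add_distrib] at h
  by_cases h1 : (#X : ℝ) ≤ 2 * ∑ k ∈ X, (1 * planeWave t k).re ^ 2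
  · exact ⟨1, norm_one, h1⟩
  · exact ⟨Complex.I, Complex.norm_I, by linarith⟩

theorem sum_sq_stencilOp_indicator_sub_le {g : (ι → ℤ) → ℝ} {μ : ℝ}
    (hg : ∀ k, stencilOp A c s g k = μ * g k) (hg1 : ∀ k, |g k| ≤ 1) (X B : Finset (ι → ℤ)) :
    ∑ k ∈ B, (stencilOp A c s ((X : Set (ι → ℤ)).indicator g) k
        - μ * (X : Set (ι → ℤ)).indicator g k) ^ 2
      ≤ (∑ p ∈ A, |c p|) ^ 2 * #(stencilBoundary A s X B) := by
  have hpt (k) : (stencilOp A c s ((X : Set (ι → ℤ)).indicator g) k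
        - μ * (X : Set (ι → ℤ)).indicator g k) ^ 2
      ≤ if ∀ p ∈ A, (k + s p ∈ X ↔ k ∈ X) then 0 else (∑ p ∈ A, |c p|) ^ 2 := by
    set h := fun p ↦ (X : Set (ι → ℤ)).indicator g (k + s p) - if k ∈ X then g (k + s p) else 0
    have hres : stencilOp A c s ((X : Set (ι → ℤ)).indicator g) k
        - μ * (X : Set (ι → ℤ)).indicator g k = ∑ p ∈ A, c p * h p := by
      simp only [h, mul_sub, sum_sub_distrib, stencilOp, Set.indicator_apply, Finset.mem_coe]
      split_ifs <;> simp [← hg, stencilOp]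
    rw [hres]
    split_ifs with hbd
    · rw [sum_eq_zero fun p hp ↦ ?_, sq, mul_zero]
      simp [h, Set.indicator_apply, hbd p hp]
    · have habs : |∑ p ∈ A, c p * h p| ≤ ∑ p ∈ A, |c p| := by
        refine (abs_sum_le_sum_abs _ _).trans (sum_le_sum fun p _ ↦ ?_)
        rw [abs_mul]
        refine mul_le_of_le_one_right (abs_nonneg _) ?_
        simp only [h, Set.indicator_apply, Finset.mem_coe]
        split_ifs <;> simp [hg1]
      rw [← sq_abs]
      exact pow_le_pow_left₀ (abs_nonneg _) habs 2
  refine (sum_le_sum fun k _ ↦ hpt k).trans_eq ?_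
  rw [sum_ite, sum_const_zero, zero_add, sum_const, nsmul_eq_mul, mul_comm, stencilBoundary]
  simp only [not_forall, exists_prop]

theorem exists_isStencilEigenvalue_sq_sub_stencilSymbol_le (hsymm : IsSymmetricStencil A c s)
    (t : ι → ℝ) {X B : Finset (ι → ℤ)} (hXB : X ⊆ B) (hX : X.Nonempty) :
    ∃ ev, IsStencilEigenvalue A c s B ev ∧ (ev - stencilSymbol A c s t) ^ 2 ≤
      2 * (∑ p ∈ A, |c p|) ^ 2 * #(stencilBoundary A s X B) / #X := by
  obtain ⟨u, hu, hXu⟩ := exists_card_le_two_mul_sum_sq_re_mul_planeWave X t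
  set g := fun k ↦ (u * planeWave t k).re
  set v := (X : Set (ι → ℤ)).indicator g
  have hg1 (k) : |g k| ≤ 1 :=
    (Complex.abs_re_le_norm _).trans (by rw [norm_mul, hu, norm_planeWave, one_mul])
  have hres := sum_sq_stencilOp_indicator_sub_le (stencilOp_re_mul_planeWave hsymm u t) hg1 X B
  have hnorm : ∑ k ∈ B, v k ^ 2 = ∑ k ∈ X, g k ^ 2 := by
    rw [← sum_subset hXB fun k _ hk ↦ by simp [v, hk]]
    exact sum_congr rfl fun k hk ↦ by simp [v, hk]
  have hXpos : (0 : ℝ) < #X := by exact_mod_cast hX.card_pos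
  have hv : v ≠ 0 := by
    obtain ⟨k, hk, hgk⟩ := exists_ne_zero_of_sum_ne_zero (by linarith : ∑ k ∈ X, g k ^ 2 ≠ 0)
    exact Function.ne_iff.mpr ⟨k, by simpa [v, hk] using hgk⟩
  refine exists_isStencilEigenvalue_sq_sub_le hsymm hv
    (fun k hk ↦ Set.indicator_of_notMem (fun h ↦ hk (hXB h)) _) ?_
  rw [hnorm]
  calc _ ≤ (∑ p ∈ A, |c p|) ^ 2 * #(stencilBoundary A s X B) := hres
    _ = 2 * (∑ p ∈ A, |c p|) ^ 2 * #(stencilBoundary A s X B) / #X * (#X / 2) := by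
      field_simp
    _ ≤ _ := by gcongr; linarith

end Stencil

section Qn

variable {d : ℕ}

noncomputable def qCoeff (q : Fin d → ℕ) (p : Fin d × Fin d) : ℝ :=
  1 / (((d : ℝ) - 1) * ∑ j, (q j : ℝ)) * √((q p.1 : ℝ) * q p.2)

def unitDiff (p : Fin d × Fin d) : Fin d → ℤ := Pi.single p.1 1 - Pi.single p.2 1

lemma isEigenvalueQn_iff (q : Fin d → ℕ) (n : ℕ) (ev : ℝ) :
    IsEigenvalueQn d q n ev ↔
      IsStencilEigenvalue univ.offDiag (qCoeff q) unitDiff (BnInt d n) ev := by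
  simp only [IsEigenvalueQn, IsStencilEigenvalue, stencilOp, qCoeff, unitDiff, mul_sum, mul_assoc,
    add_sub_assoc]

lemma Qhat_eq_stencilSymbol (q : Fin d → ℕ) :
    Qhat d q = stencilSymbol univ.offDiag (qCoeff q) unitDiff := by
  funext t
  simp only [Qhat, stencilSymbol, qCoeff, unitDiff, mul_sum, mul_assoc]
  refine sum_congr rfl fun p _ ↦ ?_
  simp [Pi.single_apply, sub_mul, sum_sub_distrib]

lemma isSymmetricStencil_qCoeff_unitDiff (q : Fin d → ℕ) :
    IsSymmetricStencil univ.offDiag (qCoeff q) unitDiff := fun g ↦ by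
  refine sum_nbij' Prod.swap Prod.swap (by simp [eq_comm]) (by simp [eq_comm]) (by simp) (by simp)
    fun p _ ↦ ?_
  simp [qCoeff, unitDiff, mul_comm]

lemma abs_unitDiff_le (p : Fin d × Fin d) (j : Fin d) : |unitDiff p j| ≤ 1 := by
  simp only [unitDiff, Pi.sub_apply, Pi.single_apply]
  split_ifs <;> simp

lemma sum_unitDiff (p : Fin d × Fin d) : ∑ j, unitDiff p j = 0 := by
  simp [unitDiff, sum_sub_distrib]

end Qn

section SumZeroBox

variable {e : ℕ}

lemma mem_BnInt_succ {n : ℕ} {k : Fin (e + 1) → ℤ} :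
    k ∈ BnInt (e + 1) n ↔
      ∑ i, k i = 0 ∧ (∀ i : Fin e, 1 ≤ k i.castSucc) ∧ 1 - (n : ℤ) ≤ k (Fin.last e) := by
  have hne (i : Fin e) : (i : ℕ) ≠ e := i.isLt.ne
  simp [BnInt, Fin.forall_fin_succ', hne]

lemma abs_le_of_mem_BnInt {n : ℕ} {k : Fin (e + 1) → ℤ} (hk : k ∈ BnInt (e + 1) n)
    (i : Fin (e + 1)) : |k i| ≤ n := by
  obtain ⟨hsum, hpos, hlast⟩ := mem_BnInt_succ.mp hk
  rw [Fin.sum_univ_castSucc] at hsum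
  have hle (j : Fin e) : k j.castSucc ≤ ∑ i : Fin e, k i.castSucc :=
    single_le_sum (f := fun i ↦ k i.castSucc) (fun i _ ↦ by linarith [hpos i]) (mem_univ j)
  have hnonneg : 0 ≤ ∑ i : Fin e, k i.castSucc := sum_nonneg fun i _ ↦ by linarith [hpos i]
  rw [abs_le]
  induction i using Fin.lastCases with
  | last => constructor <;> linarith
  | cast j => constructor <;> linarith [hpos j, hle j]

def sumZeroLift (e : ℕ) : (Fin e → ℤ) ↪ (Fin (e + 1) → ℤ) where
  toFun x := Fin.snoc x (-∑ i, x i)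
  inj' x y h := funext fun i ↦ by simpa using congrFun h i.castSucc

lemma sumZeroLift_apply (x : Fin e → ℤ) : sumZeroLift e x = Fin.snoc x (-∑ i, x i) := rfl

lemma mem_map_sumZeroLift {X : Finset (Fin e → ℤ)} {k : Fin (e + 1) → ℤ} :
    k ∈ X.map (sumZeroLift e) ↔ ∑ i, k i = 0 ∧ (fun i ↦ k i.castSucc) ∈ X := by
  constructor
  · intro h
    obtain ⟨x, hx, rfl⟩ := mem_map.mp h
    simp [sumZeroLift_apply, Fin.sum_univ_castSucc, hx]
  · rintro ⟨hsum, hx⟩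
    refine mem_map.mpr ⟨_, hx, funext fun i ↦ ?_⟩
    rw [Fin.sum_univ_castSucc] at hsum
    induction i using Fin.lastCases with
    | last => simp [sumZeroLift_apply]; linarith
    | cast j => simp [sumZeroLift_apply]

noncomputable def sumZeroBox (e : ℕ) (a b : ℤ) : Finset (Fin (e + 1) → ℤ) :=
  (Fintype.piFinset fun _ : Fin e ↦ Icc a b).map (sumZeroLift e)

lemma mem_sumZeroBox {a b : ℤ} {k : Fin (e + 1) → ℤ} :
    k ∈ sumZeroBox e a b ↔ ∑ i, k i = 0 ∧ ∀ i : Fin e, a ≤ k i.castSucc ∧ k i.castSucc ≤ b := by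
  simp [sumZeroBox, mem_map_sumZeroLift, -mem_map]

lemma card_sumZeroBox (a b : ℤ) : #(sumZeroBox e a b) = (b + 1 - a).toNat ^ e := by
  simp [sumZeroBox]

lemma sumZeroBox_subset_BnInt (m : ℕ) : ↑(sumZeroBox e 1 m) ⊆ BnInt (e + 1) (e * m + 1) := by
  intro k hk
  obtain ⟨hsum, hbox⟩ := mem_sumZeroBox.mp hk
  refine mem_BnInt_succ.mpr ⟨hsum, fun i ↦ (hbox i).1, ?_⟩
  rw [Fin.sum_univ_castSucc] at hsum
  have : ∑ i : Fin e, k i.castSucc ≤ ∑ _i : Fin e, (m : ℤ) := sum_le_sum fun i _ ↦ (hbox i).2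
  simp only [sum_const, card_univ, Fintype.card_fin, nsmul_eq_mul] at this
  push_cast
  linarith

lemma add_mem_sumZeroBox_iff {n : ℕ} {b : ℤ} {k w : Fin (e + 1) → ℤ}
    (hk : k ∈ BnInt (e + 1) n) (hw : ∑ i, w i = 0) (hw1 : ∀ i, |w i| ≤ 1)
    (hkb : k ∉ sumZeroBox e 1 (b + 1) \ sumZeroBox e 2 (b - 1)) :
    k + w ∈ sumZeroBox e 1 b ↔ k ∈ sumZeroBox e 1 b := by
  obtain ⟨hsum, hpos, -⟩ := mem_BnInt_succ.mp hk
  have hsum' : ∑ i, (k + w) i = 0 := by simp [sum_add_distrib, hsum, hw]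
  have hw' (i : Fin e) := abs_le.mp (hw1 i.castSucc)
  rw [mem_sdiff, not_and_not_right] at hkb
  by_cases hout : k ∈ sumZeroBox e 1 (b + 1)
  · have hin := (mem_sumZeroBox.mp (hkb hout)).2
    refine iff_of_true (mem_sumZeroBox.mpr ⟨hsum', fun i ↦ ?_⟩)
      (mem_sumZeroBox.mpr ⟨hsum, fun i ↦ ⟨hpos i, by linarith [hin i]⟩⟩)
    simp only [Pi.add_apply]
    constructor <;> linarith [hin i, hw' i]
  · obtain ⟨i, hi⟩ : ∃ i : Fin e, b + 1 < k i.castSucc := by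
      simp only [mem_sumZeroBox, hsum, true_and, not_forall] at hout
      obtain ⟨i, hi⟩ := hout
      exact ⟨i, by by_contra h; exact hi ⟨hpos i, by linarith⟩⟩
    refine iff_of_false (fun h ↦ ?_) (fun h ↦ ?_)
    · have := ((mem_sumZeroBox.mp h).2 i).2
      simp only [Pi.add_apply] at this
      linarith [hw' i]
    · linarith [((mem_sumZeroBox.mp h).2 i).2]

end SumZeroBox

open Filter Topology

section Approximation

variable {e : ℕ}

lemma card_stencilBoundary_sumZeroBox_le {n : ℕ} (m : ℕ) {B : Finset (Fin (e + 1) → ℤ)}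
    (hB : ∀ k ∈ B, k ∈ BnInt (e + 1) n) :
    (#(stencilBoundary univ.offDiag unitDiff (sumZeroBox e 1 (m + 2)) B) : ℝ)
      ≤ (m + 3) ^ e - m ^ e := by
  have hsub : stencilBoundary univ.offDiag unitDiff (sumZeroBox e 1 (m + 2)) B
        ⊆ sumZeroBox e 1 (m + 2 + 1) \ sumZeroBox e 2 (m + 2 - 1) := by
    intro k hk
    obtain ⟨hkB, p, -, hp⟩ := Finset.mem_filter.mp hk
    by_contra hkb
    exact hp <| add_mem_sumZeroBox_iff (hB k hkB) (sum_unitDiff p)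
      (abs_unitDiff_le p) hkb
  have hinner : sumZeroBox e 2 (m + 2 - 1) ⊆ sumZeroBox e 1 (m + 2 + 1) := fun k hk ↦ by
    simp only [mem_sumZeroBox] at hk ⊢
    exact ⟨hk.1, fun i ↦ ⟨by linarith [(hk.2 i).1], by linarith [(hk.2 i).2]⟩⟩
  have hcard := card_le_card hsub
  rw [card_sdiff_of_subset hinner, card_sumZeroBox, card_sumZeroBox,
    show ((m : ℤ) + 2 + 1 + 1 - 1).toNat = m + 3 by omega,
    show ((m : ℤ) + 2 - 1 + 1 - 2).toNat = m by omega] at hcard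
  calc (_ : ℝ) ≤ ((m + 3) ^ e - m ^ e : ℕ) := by exact_mod_cast hcard
    _ = _ := by rw [Nat.cast_sub (Nat.pow_le_pow_left (by omega) e)]; push_cast; ring

theorem exists_isEigenvalueQn_sq_sub_Qhat_le (q : Fin (e + 1) → ℕ) (m : ℕ)
    (t : Fin (e + 1) → ℝ) :
    ∃ ev, IsEigenvalueQn (e + 1) q (e * (m + 2) + 1) ev ∧
      (ev - Qhat (e + 1) q t) ^ 2 ≤
        2 * (∑ p ∈ univ.offDiag, |qCoeff q p|) ^ 2 * (((m + 3 : ℝ) ^ e - m ^ e) / (m + 2) ^ e) := by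
  set n := e * (m + 2) + 1
  have hfin : (BnInt (e + 1) n).Finite :=
    (Fintype.piFinset fun _ ↦ Icc (-n : ℤ) n).finite_toSet.subset fun k hk ↦
      Fintype.mem_piFinset.mpr fun i ↦ Finset.mem_Icc.mpr (abs_le.mp (abs_le_of_mem_BnInt hk i))
  have hXB : sumZeroBox e 1 (m + 2) ⊆ hfin.toFinset := fun k hk ↦
    hfin.mem_toFinset.mpr (sumZeroBox_subset_BnInt (m + 2) (by exact_mod_cast hk))
  have hcard : (#(sumZeroBox e 1 (m + 2)) : ℝ) = (m + 2) ^ e := by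
    rw [card_sumZeroBox, show ((m : ℤ) + 2 + 1 - 1).toNat = m + 2 by omega]
    push_cast
    ring
  have hX : (sumZeroBox e 1 (m + 2)).Nonempty := by
    rw [← card_pos, ← Nat.cast_pos (α := ℝ), hcard]
    positivity
  obtain ⟨ev, hev, hle⟩ := exists_isStencilEigenvalue_sq_sub_stencilSymbol_le
    (isSymmetricStencil_qCoeff_unitDiff q) t hXB hX
  refine ⟨ev, (isEigenvalueQn_iff q n ev).mpr (by rwa [hfin.coe_toFinset] at hev), ?_⟩
  rw [Qhat_eq_stencilSymbol]
  refine hle.trans ?_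
  rw [mul_div_assoc, hcard]
  gcongr
  exact card_stencilBoundary_sumZeroBox_le m fun k hk ↦ hfin.mem_toFinset.mp hk

lemma tendsto_sumZeroBox_boundary_ratio (e : ℕ) :
    Tendsto (fun m : ℕ ↦ ((m + 3 : ℝ) ^ e - m ^ e) / (m + 2) ^ e) atTop (𝓝 0) := by
  have h₁ : Tendsto (fun m : ℕ ↦ (3 + 1 * m : ℝ) / (2 + 1 * m)) atTop (𝓝 (1 / 1)) :=
    tendsto_add_mul_div_add_mul_atTop_nhds 3 2 1 one_ne_zero
  have h₂ : Tendsto (fun m : ℕ ↦ (0 + 1 * m : ℝ) / (2 + 1 * m)) atTop (𝓝 (1 / 1)) :=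
    tendsto_add_mul_div_add_mul_atTop_nhds 0 2 1 one_ne_zero
  have := (h₁.pow e).sub (h₂.pow e)
  rw [div_one, one_pow, sub_self] at this
  refine this.congr fun m ↦ ?_
  rw [sub_div, div_pow, div_pow]
  ring_nf

theorem exists_isEigenvalueQn_tendsto_Qhat (q : Fin (e + 1) → ℕ) (t : Fin (e + 1) → ℝ) :
    ∃ ev : ℕ → ℝ, (∀ m, IsEigenvalueQn (e + 1) q (e * (m + 2) + 1) (ev m)) ∧
      Tendsto ev atTop (𝓝 (Qhat (e + 1) q t)) := by
  choose ev hev hle using fun m ↦ exists_isEigenvalueQn_sq_sub_Qhat_le q m t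
  refine ⟨ev, hev, tendsto_iff_norm_sub_tendsto_zero.mpr ?_⟩
  have hlim := ((tendsto_sumZeroBox_boundary_ratio e).const_mul
    (2 * (∑ p ∈ univ.offDiag, |qCoeff q p|) ^ 2)).sqrt
  rw [mul_zero, sqrt_zero] at hlim
  exact squeeze_zero (fun _ ↦ norm_nonneg _) (fun m ↦ abs_le_sqrt (hle m)) hlim

end Approximation

theorem closure_eigenvalues_eq_range_Qhat (d : ℕ) (hd : 2 ≤ d) (q : Fin d → ℕ) :
    closure {lam : ℝ | ∃ n : ℕ, 2 ≤ n ∧ IsEigenvalueQn d q n lam} =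
      Set.range (Qhat d q) := by
  obtain ⟨e, rfl⟩ : ∃ e, d = e + 1 := ⟨d - 1, by omega⟩
  have hQ := Qhat_eq_stencilSymbol q
  obtain ⟨t₁, t₂, hsymb⟩ := exists_forall_stencilSymbol_mem_Icc (A := univ.offDiag)
    (c := qCoeff q) (s := unitDiff)
  have hrange : Set.Icc (Qhat (e + 1) q t₁) (Qhat (e + 1) q t₂) ⊆ Set.range (Qhat (e + 1) q) :=
    hQ ▸ (isPreconnected_range continuous_stencilSymbol).Icc_subset ⟨t₁, rfl⟩ ⟨t₂, rfl⟩
  refine subset_antisymm ((closure_minimal ?_ isClosed_Icc).trans hrange) ?_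
  · rintro ev ⟨n, -, hev⟩
    rw [hQ]
    exact ((isEigenvalueQn_iff q n ev).mp hev).mem_Icc (isSymmetricStencil_qCoeff_unitDiff q)
      (r := 1) (fun p _ j ↦ by exact_mod_cast abs_unitDiff_le p j) hsymb
      fun k hk ↦ abs_le_of_mem_BnInt hk
  · rintro _ ⟨t, rfl⟩
    obtain ⟨ev, hev, hlim⟩ := exists_isEigenvalueQn_tendsto_Qhat q t
    exact mem_closure_of_tendsto hlim (Eventually.of_forall fun m ↦ ⟨_, by nlinarith, hev m⟩)
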